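/- Nash equilibria under-protect relative to the social optimum: if x* is a Nash equilibrium and y* is the social optimum (minimizer of SC), then Σ_{d ∈ 𝒟} x*_{d,P} ≤ Σ_{d ∈ 𝒟} y*_d. -/

import Mathlib

open Finset

/-- The three actions: Protection, No action, Insurance. -/
inductive Act | P | N | I
deriving DecidableEq

/-- `𝒟 = {1, …, D_max}`. -/
def Dset (Dmax : ℕ) : Finset ℕ := Finset.Icc 1 Dmax

/-- Weighted degree distribution `w_d = d·m_d / ∑ d'·m_{d'}`. -/
noncomputable def wgt (Dmax : ℕ) (m : ℕ → ℝ) (d : ℕ) : ℝ :=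
  (d : ℝ) * m d / ∑ d' ∈ Dset Dmax, (d' : ℝ) * m d'

/-- `γ(x) = β_IA · ∑_d w_d (g_{d,P} p_P + (1 − g_{d,P}) p_U)`, where
`g_{d,P} = x_{d,P}/m_d`. -/
noncomputable def gam (Dmax : ℕ) (m : ℕ → ℝ) (pP pU βIA : ℝ) (xP : ℕ → ℝ) : ℝ :=
  βIA * ∑ d ∈ Dset Dmax, wgt Dmax m d * ((xP d / m d) * pP + (1 - xP d / m d) * pU)

/-- `λ(x) = β_IA · ∑_d w_d (d−1) (g_{d,P} p_P + (1 − g_{d,P}) p_U)`. -/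
noncomputable def lamb (Dmax : ℕ) (m : ℕ → ℝ) (pP pU βIA : ℝ) (xP : ℕ → ℝ) : ℝ :=
  βIA * ∑ d ∈ Dset Dmax,
    wgt Dmax m d * ((d : ℝ) - 1) * ((xP d / m d) * pP + (1 - xP d / m d) * pU)

/-- Risk exposure `e(x) = γ(x) · ∑_{k=1}^{K} λ(x)^{k−1}`. -/
noncomputable def expo (Dmax : ℕ) (m : ℕ → ℝ) (pP pU βIA : ℝ) (K : ℕ)
    (xP : ℕ → ℝ) : ℝ :=
  gam Dmax m pP pU βIA xP * ∑ k ∈ Finset.range K, lamb Dmax m pP pU βIA xP ^ k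

/-- Cost of a degree-`d` node playing action `a` at a social state with protected
masses `xP`:  `C_{d,P} = τ(1 + d·e)L_P + c_P`, `C_{d,N} = τ(1 + d·e)L_U`,
`C_{d,I} = C_{d,N} + c_I − min(Cov_max, ξ·max(0, C_{d,N} − ded))`. -/
noncomputable def cost (Dmax : ℕ) (m : ℕ → ℝ) (pP pU βIA τ LP LU cP cI ξ ded Cov : ℝ)
    (K : ℕ) (xP : ℕ → ℝ) (d : ℕ) : Act → ℝ
  | Act.P => τ * (1 + (d : ℝ) * expo Dmax m pP pU βIA K xP) * LP + cP
  | Act.N => τ * (1 + (d : ℝ) * expo Dmax m pP pU βIA K xP) * LU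
  | Act.I => τ * (1 + (d : ℝ) * expo Dmax m pP pU βIA K xP) * LU + cI
      - min Cov (ξ * max 0 (τ * (1 + (d : ℝ) * expo Dmax m pP pU βIA K xP) * LU - ded))

/-- Admissible social state: nonnegative masses summing to `m_d` within each population. -/
def isState (Dmax : ℕ) (m : ℕ → ℝ) (x : ℕ → Act → ℝ) : Prop :=
  ∀ d ∈ Dset Dmax, (∀ a : Act, 0 ≤ x d a) ∧ x d Act.P + x d Act.N + x d Act.I = m d

/-- Nash equilibrium: any action played by a positive mass of population `d`
minimizes the cost for population `d`. -/
def isNE (Dmax : ℕ) (m : ℕ → ℝ) (pP pU βIA τ LP LU cP cI ξ ded Cov : ℝ)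
    (K : ℕ) (x : ℕ → Act → ℝ) : Prop :=
  isState Dmax m x ∧
    ∀ d ∈ Dset Dmax, ∀ a : Act, 0 < x d a →
      ∀ a' : Act, cost Dmax m pP pU βIA τ LP LU cP cI ξ ded Cov K (fun d' => x d' Act.P) d a
        ≤ cost Dmax m pP pU βIA τ LP LU cP cI ξ ded Cov K (fun d' => x d' Act.P) d a'

/-- Social cost of a planner action `y` (protected masses, remainder unprotected). -/
noncomputable def SC (Dmax : ℕ) (m : ℕ → ℝ) (pP pU βIA τ LP LU cP : ℝ) (K : ℕ)
    (y : ℕ → ℝ) : ℝ :=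
  ∑ d ∈ Dset Dmax,
    (y d * (τ * (1 + (d : ℝ) * expo Dmax m pP pU βIA K y) * LP + cP)
      + (m d - y d) * (τ * (1 + (d : ℝ) * expo Dmax m pP pU βIA K y) * LU))

/-- Admissible planner action: `y_d ∈ [0, m_d]` for each `d ∈ 𝒟`. -/
def isPlan (Dmax : ℕ) (m : ℕ → ℝ) (y : ℕ → ℝ) : Prop :=
  ∀ d ∈ Dset Dmax, 0 ≤ y d ∧ y d ≤ m d

section Aux

variable {Dmax : ℕ} {m : ℕ → ℝ} {pP pU βIA : ℝ} {K : ℕ}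

lemma one_le_sum_pow {lam : ℝ} (hl : 0 ≤ lam) (hK : 1 ≤ K) :
    (1:ℝ) ≤ ∑ k ∈ Finset.range K, lam ^ k := by
  have h0 : (0:ℕ) ∈ Finset.range K := Finset.mem_range.mpr hK
  have := Finset.single_le_sum (f := fun k => lam ^ k)
    (fun i _ => pow_nonneg hl i) h0
  simpa using this

lemma Wpos (hD : 1 ≤ Dmax) (hm : ∀ d ∈ Dset Dmax, 0 < m d) :
    0 < ∑ d ∈ Dset Dmax, (d:ℝ) * m d := by
  apply Finset.sum_pos
  · intro d hd
    have h1 : 1 ≤ d := (Finset.mem_Icc.mp hd).1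
    have : (0:ℝ) < d := by exact_mod_cast Nat.lt_of_lt_of_le Nat.zero_lt_one h1
    exact mul_pos this (hm d hd)
  · exact ⟨1, Finset.mem_Icc.mpr ⟨le_refl 1, hD⟩⟩

lemma conv_nonneg {g pP pU : ℝ} (hg0 : 0 ≤ g) (hg1 : g ≤ 1) (hpP : 0 ≤ pP) (hpU : 0 ≤ pU) :
    0 ≤ g * pP + (1 - g) * pU :=
  add_nonneg (mul_nonneg hg0 hpP) (mul_nonneg (by linarith) hpU)

lemma gam_nonneg (hD : 1 ≤ Dmax) (hm : ∀ d ∈ Dset Dmax, 0 < m d)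
    (hpP : 0 ≤ pP) (hpU : 0 ≤ pU) (hβ : 0 ≤ βIA)
    {u : ℕ → ℝ} (hu : ∀ d ∈ Dset Dmax, 0 ≤ u d ∧ u d ≤ m d) :
    0 ≤ gam Dmax m pP pU βIA u := by
  apply mul_nonneg hβ
  apply Finset.sum_nonneg
  intro d hd
  have hmd := hm d hd
  have hW := Wpos hD hm
  apply mul_nonneg
  · exact div_nonneg (mul_nonneg (Nat.cast_nonneg d) hmd.le) hW.le
  · exact conv_nonneg (div_nonneg (hu d hd).1 hmd.le)
      ((div_le_one hmd).mpr (hu d hd).2) hpP hpU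

lemma lamb_nonneg (hD : 1 ≤ Dmax) (hm : ∀ d ∈ Dset Dmax, 0 < m d)
    (hpP : 0 ≤ pP) (hpU : 0 ≤ pU) (hβ : 0 ≤ βIA)
    {u : ℕ → ℝ} (hu : ∀ d ∈ Dset Dmax, 0 ≤ u d ∧ u d ≤ m d) :
    0 ≤ lamb Dmax m pP pU βIA u := by
  apply mul_nonneg hβ
  apply Finset.sum_nonneg
  intro d hd
  have hmd := hm d hd
  have hW := Wpos hD hm
  have h1 : (1:ℝ) ≤ (d:ℝ) := by exact_mod_cast (Finset.mem_Icc.mp hd).1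
  apply mul_nonneg
  · apply mul_nonneg
    · exact div_nonneg (mul_nonneg (Nat.cast_nonneg d) hmd.le) hW.le
    · linarith
  · exact conv_nonneg (div_nonneg (hu d hd).1 hmd.le)
      ((div_le_one hmd).mpr (hu d hd).2) hpP hpU

lemma gam_sub (hD : 1 ≤ Dmax) (hm : ∀ d ∈ Dset Dmax, 0 < m d) (u v : ℕ → ℝ) :
    gam Dmax m pP pU βIA u - gam Dmax m pP pU βIA v
      = βIA * (pP - pU) / (∑ d' ∈ Dset Dmax, (d':ℝ) * m d')
          * ∑ d ∈ Dset Dmax, (d:ℝ) * (u d - v d) := by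
  have hW := (Wpos hD hm).ne'
  unfold gam wgt
  rw [← mul_sub, ← Finset.sum_sub_distrib, Finset.mul_sum, Finset.mul_sum]
  apply Finset.sum_congr rfl
  intro d hd
  have hmd := (hm d hd).ne'
  field_simp
  ring

lemma lamb_sub (hD : 1 ≤ Dmax) (hm : ∀ d ∈ Dset Dmax, 0 < m d) (u v : ℕ → ℝ) :
    lamb Dmax m pP pU βIA u - lamb Dmax m pP pU βIA v
      = βIA * (pP - pU) / (∑ d' ∈ Dset Dmax, (d':ℝ) * m d')
          * ∑ d ∈ Dset Dmax, (d:ℝ) * ((d:ℝ) - 1) * (u d - v d) := by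
  have hW := (Wpos hD hm).ne'
  unfold lamb wgt
  rw [← mul_sub, ← Finset.sum_sub_distrib, Finset.mul_sum, Finset.mul_sum]
  apply Finset.sum_congr rfl
  intro d hd
  have hmd := (hm d hd).ne'
  field_simp
  ring

lemma expo_mono (hK : 1 ≤ K) {u v : ℕ → ℝ}
    (hg0 : 0 ≤ gam Dmax m pP pU βIA u) (hl0 : 0 ≤ lamb Dmax m pP pU βIA u)
    (hg : gam Dmax m pP pU βIA u ≤ gam Dmax m pP pU βIA v)
    (hl : lamb Dmax m pP pU βIA u ≤ lamb Dmax m pP pU βIA v) :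
    expo Dmax m pP pU βIA K u ≤ expo Dmax m pP pU βIA K v := by
  unfold expo
  apply mul_le_mul hg
  · exact Finset.sum_le_sum fun k _ => pow_le_pow_left₀ hl0 hl k
  · exact Finset.sum_nonneg fun k _ => pow_nonneg hl0 k
  · exact le_trans hg0 hg

lemma expo_gap (hK : 1 ≤ K) {u v : ℕ → ℝ}
    (hg0 : 0 ≤ gam Dmax m pP pU βIA u) (hl0 : 0 ≤ lamb Dmax m pP pU βIA u)
    (hg : gam Dmax m pP pU βIA u ≤ gam Dmax m pP pU βIA v)
    (hl : lamb Dmax m pP pU βIA u ≤ lamb Dmax m pP pU βIA v) :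
    gam Dmax m pP pU βIA v - gam Dmax m pP pU βIA u
      ≤ expo Dmax m pP pU βIA K v - expo Dmax m pP pU βIA K u := by
  unfold expo
  set gu := gam Dmax m pP pU βIA u
  set gv := gam Dmax m pP pU βIA v
  set Su := ∑ k ∈ Finset.range K, lamb Dmax m pP pU βIA u ^ k with hSu
  set Sv := ∑ k ∈ Finset.range K, lamb Dmax m pP pU βIA v ^ k with hSv
  have h1 : (1:ℝ) ≤ Su := one_le_sum_pow hl0 hK
  have h2 : Su ≤ Sv := Finset.sum_le_sum fun k _ => pow_le_pow_left₀ hl0 hl k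
  have hgv : 0 ≤ gv := le_trans hg0 hg
  nlinarith [mul_le_mul_of_nonneg_left h2 hgv,
    mul_nonneg (sub_nonneg.2 hg) (sub_nonneg.2 h1)]

lemma expo_nonneg (hD : 1 ≤ Dmax) (hm : ∀ d ∈ Dset Dmax, 0 < m d)
    (hpP : 0 ≤ pP) (hpU : 0 ≤ pU) (hβ : 0 ≤ βIA)
    {u : ℕ → ℝ} (hu : ∀ d ∈ Dset Dmax, 0 ≤ u d ∧ u d ≤ m d) :
    0 ≤ expo Dmax m pP pU βIA K u :=
  mul_nonneg (gam_nonneg hD hm hpP hpU hβ hu)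
    (Finset.sum_nonneg fun k _ => pow_nonneg (lamb_nonneg hD hm hpP hpU hβ hu) k)

lemma expo_zero_full (hD : 1 ≤ Dmax) (hm : ∀ d ∈ Dset Dmax, 0 < m d)
    (hpP : 0 ≤ pP) (hpU0 : 0 < pU) (hβ : 0 < βIA) (hK : 1 ≤ K)
    {u : ℕ → ℝ} (hu : ∀ d ∈ Dset Dmax, 0 ≤ u d ∧ u d ≤ m d)
    (h0 : expo Dmax m pP pU βIA K u = 0) :
    ∀ d ∈ Dset Dmax, u d = m d := by
  have hgn := gam_nonneg hD hm hpP hpU0.le hβ.le hu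
  have hln := lamb_nonneg hD hm hpP hpU0.le hβ.le hu
  have hS : (1:ℝ) ≤ ∑ k ∈ Finset.range K, lamb Dmax m pP pU βIA u ^ k :=
    one_le_sum_pow hln hK
  have hg0 : gam Dmax m pP pU βIA u = 0 := by
    unfold expo at h0
    rcases mul_eq_zero.mp h0 with h | h
    · exact h
    · exfalso; rw [h] at hS; linarith
  -- each summand is zero
  have hterm : ∀ d ∈ Dset Dmax,
      wgt Dmax m d * ((u d / m d) * pP + (1 - u d / m d) * pU) = 0 := by
    have hsum : ∑ d ∈ Dset Dmax,
        wgt Dmax m d * ((u d / m d) * pP + (1 - u d / m d) * pU) = 0 := by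
      unfold gam at hg0
      rcases mul_eq_zero.mp hg0 with h | h
      · exact absurd h hβ.ne'
      · exact h
    intro d hd
    have hnn : ∀ d ∈ Dset Dmax,
        0 ≤ wgt Dmax m d * ((u d / m d) * pP + (1 - u d / m d) * pU) := by
      intro d' hd'
      have hmd := hm d' hd'
      exact mul_nonneg
        (div_nonneg (mul_nonneg (Nat.cast_nonneg d') hmd.le) (Wpos hD hm).le)
        (conv_nonneg (div_nonneg (hu d' hd').1 hmd.le)
          ((div_le_one hmd).mpr (hu d' hd').2) hpP hpU0.le)
    exact (Finset.sum_eq_zero_iff_of_nonneg hnn).mp hsum d hd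
  intro d hd
  have hmd := hm d hd
  have h1 : 1 ≤ d := (Finset.mem_Icc.mp hd).1
  have hdp : (0:ℝ) < d := by exact_mod_cast Nat.lt_of_lt_of_le Nat.zero_lt_one h1
  have hwpos : 0 < wgt Dmax m d := div_pos (mul_pos hdp hmd) (Wpos hD hm)
  have hconv : (u d / m d) * pP + (1 - u d / m d) * pU = 0 := by
    rcases mul_eq_zero.mp (hterm d hd) with h | h
    · exact absurd h hwpos.ne'
    · exact h
  have hg0' : 0 ≤ u d / m d := div_nonneg (hu d hd).1 hmd.le
  have hg1 : u d / m d ≤ 1 := (div_le_one hmd).mpr (hu d hd).2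
  have ht1 : 0 ≤ (u d / m d) * pP := mul_nonneg hg0' hpP
  have ht2 : 0 ≤ (1 - u d / m d) * pU := mul_nonneg (by linarith) hpU0.le
  have h2 : (1 - u d / m d) * pU = 0 := by linarith
  have : 1 - u d / m d = 0 := by
    rcases mul_eq_zero.mp h2 with h | h
    · exact h
    · exact absurd h hpU0.ne'
  have : u d / m d = 1 := by linarith
  field_simp at this
  linarith [this]

lemma SC_sub (τ LP LU cP : ℝ) (u v : ℕ → ℝ) :
    SC Dmax m pP pU βIA τ LP LU cP K u - SC Dmax m pP pU βIA τ LP LU cP K v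
      = ∑ d ∈ Dset Dmax,
          (τ * (d:ℝ) * (expo Dmax m pP pU βIA K u - expo Dmax m pP pU βIA K v)
              * (LU * m d - (LU - LP) * u d)
            + (u d - v d) * (cP - τ * (1 + (d:ℝ) * expo Dmax m pP pU βIA K v) * (LU - LP))) := by
  unfold SC
  rw [← Finset.sum_sub_distrib]
  exact Finset.sum_congr rfl fun d _ => by ring

end Aux

lemma min_max_lip {Cov ξ a b : ℝ} (hξ : 0 ≤ ξ) (hab : a ≤ b) :
    min Cov (ξ * max 0 b) ≤ min Cov (ξ * max 0 a) + ξ * (b - a) := by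
  rcases le_total Cov (ξ * max 0 a) with h | h
  · have h1 : min Cov (ξ * max 0 b) ≤ Cov := min_le_left _ _
    have h2 : min Cov (ξ * max 0 a) = Cov := min_eq_left h
    have h3 : 0 ≤ ξ * (b - a) := mul_nonneg hξ (by linarith)
    linarith
  · have h2 : min Cov (ξ * max 0 a) = ξ * max 0 a := min_eq_right h
    have h4 : max 0 b ≤ max 0 a + (b - a) := by
      apply max_le
      · have := le_max_left (0:ℝ) a; linarith
      · have := le_max_right (0:ℝ) a; linarith
    have h5 : min Cov (ξ * max 0 b) ≤ ξ * max 0 b := min_le_right _ _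
    nlinarith [mul_le_mul_of_nonneg_left h4 hξ]
set_option maxHeartbeats 2000000 in

/-- Nash equilibria under-protect relative to the social optimum:
the total protected mass at any Nash equilibrium is at most the total protected
mass at the social optimum. -/
theorem NE_underprotects (Dmax : ℕ) (hD : 1 ≤ Dmax)
    (m : ℕ → ℝ) (hm : ∀ d ∈ Dset Dmax, 0 < m d)
    (pP pU βIA τ LP LU cP cI ξ ded Cov : ℝ) (K : ℕ)
    (hpP : 0 ≤ pP) (hp : pP < pU) (hpU : pU ≤ 1)
    (hβ0 : 0 < βIA) (hβ1 : βIA ≤ 1) (hK : 1 ≤ K)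
    (hτ0 : 0 < τ) (hτ1 : τ ≤ 1)
    (hLP : 0 < LP) (hL : LP < (1 - ξ) * LU)
    (hξ0 : 0 < ξ) (hξ1 : ξ ≤ 1) (hCov : 0 ≤ Cov) (hded : 0 ≤ ded)
    (hc : cI + ded < cP)
    (x : ℕ → Act → ℝ)
    (hNE : isNE Dmax m pP pU βIA τ LP LU cP cI ξ ded Cov K x)
    (ystar : ℕ → ℝ) (hplan : isPlan Dmax m ystar)
    (hmin : ∀ y : ℕ → ℝ, isPlan Dmax m y →
      SC Dmax m pP pU βIA τ LP LU cP K ystar ≤ SC Dmax m pP pU βIA τ LP LU cP K y) :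
    ∑ d ∈ Dset Dmax, x d Act.P ≤ ∑ d ∈ Dset Dmax, ystar d := by
  classical
  obtain ⟨hstate, hbr⟩ := hNE
  -- basic sign facts
  have h1ξ : 0 < 1 - ξ := by
    rcases lt_or_eq_of_le hξ1 with h | h
    · linarith
    · exfalso; rw [h] at hL; simp at hL; linarith
  have hLU : 0 < LU := by
    by_contra h; push_neg at h
    have h2 : 0 ≤ (1 - ξ) * -LU := mul_nonneg h1ξ.le (neg_nonneg.mpr h)
    linarith [h2]
  have hxiLU : 0 ≤ ξ * LU := mul_nonneg hξ0.le hLU.le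
  have hDL : 0 < LU - LP := by
    have hexp : (1 - ξ) * LU = LU - ξ * LU := by ring
    linarith
  have hΔp : 0 < pU - pP := by linarith
  have hpU0 : 0 < pU := lt_of_le_of_lt hpP hp
  have hW : 0 < ∑ d' ∈ Dset Dmax, (d' : ℝ) * m d' := Wpos hD hm
  set W := ∑ d' ∈ Dset Dmax, (d' : ℝ) * m d' with hWdef
  -- bounds for the NE protection profile
  have hxb : ∀ d ∈ Dset Dmax, 0 ≤ x d Act.P ∧ x d Act.P ≤ m d := by
    intro d hd
    obtain ⟨hnn, hsum⟩ := hstate d hd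
    exact ⟨hnn Act.P, by have := hnn Act.N; have := hnn Act.I; linarith⟩
  set Ex := expo Dmax m pP pU βIA K (fun d' => x d' Act.P) with hExdef
  set Ey := expo Dmax m pP pU βIA K ystar with hEydef
  have hEx0 : 0 ≤ Ex := expo_nonneg hD hm hpP hpU0.le hβ0.le hxb
  have hEy0 : 0 ≤ Ey := expo_nonneg hD hm hpP hpU0.le hβ0.le hplan
  by_contra hcon
  have hex : ∃ d0 ∈ Dset Dmax, ystar d0 < x d0 Act.P := by
    by_contra hc2; push_neg at hc2
    exact hcon (Finset.sum_le_sum hc2)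
  obtain ⟨d0, hd0, hlt⟩ := hex
  have hd01 : 1 ≤ d0 := (Finset.mem_Icc.mp hd0).1
  have hd0r : (1:ℝ) ≤ (d0:ℝ) := by exact_mod_cast hd01
  have hx0pos : 0 < x d0 Act.P := lt_of_le_of_lt (hplan d0 hd0).1 hlt
  have hy0lt : ystar d0 < m d0 := lt_of_lt_of_le hlt (hxb d0 hd0).2
  -- Step 1 : NE single crossing : for d > d0 everyone protects
  have hfull : ∀ d ∈ Dset Dmax, d0 < d → x d Act.P = m d := by
    rcases eq_or_lt_of_le hEx0 with hEx | hEx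
    · intro d hd _
      exact expo_zero_full hD hm hpP hpU0 hβ0 hK hxb hEx.symm d hd
    · intro d hd hdgt
      by_contra hne
      have hxd : x d Act.P < m d := lt_of_le_of_ne (hxb d hd).2 hne
      obtain ⟨hnn, hsum⟩ := hstate d hd
      have hdd0 : (d0:ℝ) < (d:ℝ) := by exact_mod_cast hdgt
      have hPN0 := hbr d0 hd0 Act.P hx0pos Act.N
      have hPI0 := hbr d0 hd0 Act.P hx0pos Act.I
      simp only [cost] at hPN0 hPI0
      rw [← hExdef] at hPN0 hPI0
      rcases lt_or_ge 0 (x d Act.N) with hN | hN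
      · have hNP := hbr d hd Act.N hN Act.P
        simp only [cost] at hNP
        rw [← hExdef] at hNP
        linarith [hNP, hPN0, mul_pos (mul_pos hτ0 hDL) (mul_pos hEx (sub_pos.mpr hdd0))]
      · have hI : 0 < x d Act.I := by have := hnn Act.N; have := hnn Act.I; linarith
        have hIP := hbr d hd Act.I hI Act.P
        simp only [cost] at hIP
        rw [← hExdef] at hIP
        have hble : τ * (1 + (d0:ℝ) * Ex) * LU - ded ≤ τ * (1 + (d:ℝ) * Ex) * LU - ded := by
          linarith [mul_nonneg (mul_nonneg hτ0.le hLU.le) (mul_nonneg hEx.le (sub_pos.mpr hdd0).le)]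
        have hlip := min_max_lip (Cov := Cov) hξ0.le hble
        have hgap : 0 < LU - LP - ξ * LU := by
          have hexp : (1 - ξ) * LU = LU - ξ * LU := by ring
          linarith
        linarith [hIP, hPI0, hlip, mul_pos (mul_pos hτ0 hgap) (mul_pos hEx (sub_pos.mpr hdd0))]
  -- Step 2 : planner sortedness : for d < d0 the planner protects nobody
  have hEypos : 0 < Ey := by
    rcases eq_or_lt_of_le hEy0 with h | h
    · exfalso
      have := expo_zero_full hD hm hpP hpU0 hβ0 hK hplan h.symm d0 hd0
      linarith
    · exact h
  have hzero : ∀ d ∈ Dset Dmax, d < d0 → ystar d = 0 := by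
    intro d hd hdlt
    by_contra hne
    have hyd : 0 < ystar d := lt_of_le_of_ne (hplan d hd).1 (Ne.symm hne)
    have hdne : d ≠ d0 := Nat.ne_of_lt hdlt
    have hdd0 : (d:ℝ) < (d0:ℝ) := by exact_mod_cast hdlt
    have hd1 : (1:ℝ) ≤ (d:ℝ) := by exact_mod_cast (Finset.mem_Icc.mp hd).1
    set t := min (ystar d) (m d0 - ystar d0) with htdef
    have ht : 0 < t := lt_min hyd (by linarith)
    have ht1 : t ≤ ystar d := min_le_left _ _
    have ht2 : t ≤ m d0 - ystar d0 := min_le_right _ _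
    set y' : ℕ → ℝ :=
      Function.update (Function.update ystar d (ystar d - t)) d0 (ystar d0 + t) with hy'def
    have hy'd0 : y' d0 = ystar d0 + t := by simp [hy'def]
    have hy'd : y' d = ystar d - t := by
      simp [hy'def, Function.update_of_ne hdne]
    have hy'o : ∀ b, b ≠ d → b ≠ d0 → y' b = ystar b := by
      intro b hb hb0
      simp [hy'def, Function.update_of_ne hb0, Function.update_of_ne hb]
    have hplan' : isPlan Dmax m y' := by
      intro d' hd'
      by_cases h0 : d' = d0
      · subst h0; rw [hy'd0]
        constructor
        · have := (hplan d' hd').1; linarith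
        · linarith
      · by_cases h1 : d' = d
        · subst h1; rw [hy'd]
          constructor
          · linarith
          · have := (hplan d' hd').2; linarith
        · rw [hy'o d' h1 h0]; exact hplan d' hd'
    -- two-point sums
    have hsum1 : ∑ d' ∈ Dset Dmax, (d':ℝ) * (y' d' - ystar d') = t * ((d0:ℝ) - (d:ℝ)) := by
      rw [← Finset.sum_erase_add _ _ hd0]
      have hdin : d ∈ (Dset Dmax).erase d0 := Finset.mem_erase.mpr ⟨hdne, hd⟩
      rw [← Finset.sum_erase_add _ _ hdin]
      have hrest : ∑ b ∈ ((Dset Dmax).erase d0).erase d, (b:ℝ) * (y' b - ystar b) = 0 := by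
        apply Finset.sum_eq_zero
        intro b hb
        obtain ⟨hbd, hb'⟩ := Finset.mem_erase.mp hb
        obtain ⟨hbd0, _⟩ := Finset.mem_erase.mp hb'
        rw [hy'o b hbd hbd0]; ring
      rw [hrest, hy'd0, hy'd]; ring
    have hsum2 : ∑ d' ∈ Dset Dmax, (d':ℝ) * ((d':ℝ) - 1) * (y' d' - ystar d')
        = t * ((d0:ℝ) * ((d0:ℝ) - 1) - (d:ℝ) * ((d:ℝ) - 1)) := by
      rw [← Finset.sum_erase_add _ _ hd0]
      have hdin : d ∈ (Dset Dmax).erase d0 := Finset.mem_erase.mpr ⟨hdne, hd⟩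
      rw [← Finset.sum_erase_add _ _ hdin]
      have hrest : ∑ b ∈ ((Dset Dmax).erase d0).erase d,
          (b:ℝ) * ((b:ℝ) - 1) * (y' b - ystar b) = 0 := by
        apply Finset.sum_eq_zero
        intro b hb
        obtain ⟨hbd, hb'⟩ := Finset.mem_erase.mp hb
        obtain ⟨hbd0, _⟩ := Finset.mem_erase.mp hb'
        rw [hy'o b hbd hbd0]; ring
      rw [hrest, hy'd0, hy'd]; ring
    -- exposure decreases
    have hcoef : βIA * (pP - pU) / W ≤ 0 :=
      div_nonpos_of_nonpos_of_nonneg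
        (mul_nonpos_of_nonneg_of_nonpos hβ0.le (by linarith)) hW.le
    have hgle : gam Dmax m pP pU βIA y' ≤ gam Dmax m pP pU βIA ystar := by
      have h := gam_sub (pP := pP) (pU := pU) (βIA := βIA) hD hm y' ystar
      rw [hsum1] at h
      linarith [h, mul_nonpos_of_nonpos_of_nonneg hcoef
        (mul_nonneg ht.le (sub_nonneg.mpr hdd0.le))]
    have hlle : lamb Dmax m pP pU βIA y' ≤ lamb Dmax m pP pU βIA ystar := by
      have h := lamb_sub (pP := pP) (pU := pU) (βIA := βIA) hD hm y' ystar
      rw [hsum2] at h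
      have hq : 0 ≤ (d0:ℝ) * ((d0:ℝ) - 1) - (d:ℝ) * ((d:ℝ) - 1) := by
        have := mul_le_mul hdd0.le (sub_le_sub_right hdd0.le 1)
          (by linarith) (by linarith)
        linarith
      linarith [h, mul_nonpos_of_nonpos_of_nonneg hcoef (mul_nonneg ht.le hq)]
    have hE'le : expo Dmax m pP pU βIA K y' ≤ Ey := by
      rw [hEydef]
      exact expo_mono hK (gam_nonneg hD hm hpP hpU0.le hβ0.le hplan')
        (lamb_nonneg hD hm hpP hpU0.le hβ0.le hplan') hgle hlle
    -- social cost strictly decreases : contradiction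
    have hkey := SC_sub (Dmax := Dmax) (m := m) (pP := pP) (pU := pU) (βIA := βIA)
      (K := K) τ LP LU cP y' ystar
    rw [Finset.sum_add_distrib] at hkey
    have hA : ∑ d' ∈ Dset Dmax,
        τ * (d':ℝ) * (expo Dmax m pP pU βIA K y' - Ey)
          * (LU * m d' - (LU - LP) * y' d') ≤ 0 := by
      apply Finset.sum_nonpos
      intro d' hd'
      have hB : 0 ≤ LU * m d' - (LU - LP) * y' d' := by
        have h1 := (hplan' d' hd').2
        have h2 := (hm d' hd')
        have h3 : 0 ≤ (LU - LP) * (m d' - y' d') := mul_nonneg hDL.le (by linarith)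
        linarith [h3, mul_nonneg hLP.le h2.le]
      have hfac : τ * (d':ℝ) * (expo Dmax m pP pU βIA K y' - Ey) ≤ 0 :=
        mul_nonpos_of_nonneg_of_nonpos
          (mul_nonneg hτ0.le (Nat.cast_nonneg d')) (by linarith)
      exact mul_nonpos_of_nonpos_of_nonneg hfac hB
    have hC : ∑ d' ∈ Dset Dmax, (y' d' - ystar d')
        * (cP - τ * (1 + (d':ℝ) * Ey) * (LU - LP))
        = t * (τ * (1 + (d:ℝ) * Ey) * (LU - LP) - τ * (1 + (d0:ℝ) * Ey) * (LU - LP)) := by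
      rw [← Finset.sum_erase_add _ _ hd0]
      have hdin : d ∈ (Dset Dmax).erase d0 := Finset.mem_erase.mpr ⟨hdne, hd⟩
      rw [← Finset.sum_erase_add _ _ hdin]
      have hrest : ∑ b ∈ ((Dset Dmax).erase d0).erase d,
          (y' b - ystar b) * (cP - τ * (1 + (b:ℝ) * Ey) * (LU - LP)) = 0 := by
        apply Finset.sum_eq_zero
        intro b hb
        obtain ⟨hbd, hb'⟩ := Finset.mem_erase.mp hb
        obtain ⟨hbd0, _⟩ := Finset.mem_erase.mp hb'
        rw [hy'o b hbd hbd0]; ring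
      rw [hrest, hy'd0, hy'd]; ring
    have hneg : t * (τ * (1 + (d:ℝ) * Ey) * (LU - LP) - τ * (1 + (d0:ℝ) * Ey) * (LU - LP)) < 0 := by
      linarith [mul_pos (mul_pos (mul_pos ht hτ0) hDL) (mul_pos hEypos (sub_pos.mpr hdd0))]
    have hup := hmin y' hplan'
    rw [← hEydef] at hkey
    linarith [hkey, hA, hC, hneg, hup]
  -- Step 3 : componentwise domination, hence exposures compare
  have hcomp : ∀ d ∈ Dset Dmax, ystar d ≤ x d Act.P := by
    intro d hd
    rcases lt_trichotomy d d0 with h | h | h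
    · rw [hzero d hd h]; exact (hxb d hd).1
    · subst h; exact hlt.le
    · rw [hfull d hd h]; exact (hplan d hd).2
  have hgxy : gam Dmax m pP pU βIA (fun d' => x d' Act.P) ≤ gam Dmax m pP pU βIA ystar := by
    have h := gam_sub (pP := pP) (pU := pU) (βIA := βIA) hD hm (fun d' => x d' Act.P) ystar
    have hs : 0 ≤ ∑ d' ∈ Dset Dmax, (d':ℝ) * (x d' Act.P - ystar d') := by
      apply Finset.sum_nonneg
      intro d' hd'
      exact mul_nonneg (Nat.cast_nonneg d') (sub_nonneg.mpr (hcomp d' hd'))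
    have hcoef : βIA * (pP - pU) / W ≤ 0 :=
      div_nonpos_of_nonpos_of_nonneg
        (mul_nonpos_of_nonneg_of_nonpos hβ0.le (by linarith)) hW.le
    linarith [h, mul_nonpos_of_nonpos_of_nonneg hcoef hs]
  have hlxy : lamb Dmax m pP pU βIA (fun d' => x d' Act.P) ≤ lamb Dmax m pP pU βIA ystar := by
    have h := lamb_sub (pP := pP) (pU := pU) (βIA := βIA) hD hm (fun d' => x d' Act.P) ystar
    have hs : 0 ≤ ∑ d' ∈ Dset Dmax, (d':ℝ) * ((d':ℝ) - 1) * (x d' Act.P - ystar d') := by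
      apply Finset.sum_nonneg
      intro d' hd'
      have h1 : (1:ℝ) ≤ (d':ℝ) := by exact_mod_cast (Finset.mem_Icc.mp hd').1
      exact mul_nonneg (mul_nonneg (Nat.cast_nonneg d') (by linarith))
        (sub_nonneg.mpr (hcomp d' hd'))
    have hcoef : βIA * (pP - pU) / W ≤ 0 :=
      div_nonpos_of_nonpos_of_nonneg
        (mul_nonpos_of_nonneg_of_nonpos hβ0.le (by linarith)) hW.le
    linarith [h, mul_nonpos_of_nonpos_of_nonneg hcoef hs]
  have hExEy : Ex ≤ Ey := by
    rw [hExdef, hEydef]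
    exact expo_mono hK (gam_nonneg hD hm hpP hpU0.le hβ0.le hxb)
      (lamb_nonneg hD hm hpP hpU0.le hβ0.le hxb) hgxy hlxy
  -- Step 4 : planner first-order condition at d0
  set t2 := m d0 - ystar d0 with ht2def
  have ht2 : 0 < t2 := by rw [ht2def]; linarith
  set u : ℕ → ℝ := Function.update ystar d0 (m d0) with hudef
  have hud0 : u d0 = m d0 := by simp [hudef]
  have huo : ∀ b, b ≠ d0 → u b = ystar b := by
    intro b hb; simp [hudef, Function.update_of_ne hb]
  have hplanu : isPlan Dmax m u := by
    intro d' hd'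
    by_cases h0 : d' = d0
    · subst h0; rw [hud0]; exact ⟨(hm d' hd').le, le_refl _⟩
    · rw [huo d' h0]; exact hplan d' hd'
  have hsumu1 : ∑ d' ∈ Dset Dmax, (d':ℝ) * (u d' - ystar d') = (d0:ℝ) * t2 := by
    rw [← Finset.sum_erase_add _ _ hd0]
    have hrest : ∑ b ∈ (Dset Dmax).erase d0, (b:ℝ) * (u b - ystar b) = 0 := by
      apply Finset.sum_eq_zero
      intro b hb
      rw [huo b (Finset.mem_erase.mp hb).1]; ring
    rw [hrest, hud0, ht2def]; ring
  have hsumu2 : ∑ d' ∈ Dset Dmax, (d':ℝ) * ((d':ℝ) - 1) * (u d' - ystar d')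
      = (d0:ℝ) * ((d0:ℝ) - 1) * t2 := by
    rw [← Finset.sum_erase_add _ _ hd0]
    have hrest : ∑ b ∈ (Dset Dmax).erase d0, (b:ℝ) * ((b:ℝ) - 1) * (u b - ystar b) = 0 := by
      apply Finset.sum_eq_zero
      intro b hb
      rw [huo b (Finset.mem_erase.mp hb).1]; ring
    rw [hrest, hud0, ht2def]; ring
  have hcoef : βIA * (pP - pU) / W ≤ 0 :=
    div_nonpos_of_nonpos_of_nonneg
      (mul_nonpos_of_nonneg_of_nonpos hβ0.le (by linarith)) hW.le
  have hgu : gam Dmax m pP pU βIA u ≤ gam Dmax m pP pU βIA ystar := by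
    have h := gam_sub (pP := pP) (pU := pU) (βIA := βIA) hD hm u ystar
    rw [hsumu1] at h
    linarith [h, mul_nonpos_of_nonpos_of_nonneg hcoef
      (mul_nonneg (Nat.cast_nonneg d0) ht2.le)]
  have hlu : lamb Dmax m pP pU βIA u ≤ lamb Dmax m pP pU βIA ystar := by
    have h := lamb_sub (pP := pP) (pU := pU) (βIA := βIA) hD hm u ystar
    rw [hsumu2] at h
    have hq : 0 ≤ (d0:ℝ) * ((d0:ℝ) - 1) * t2 :=
      mul_nonneg (mul_nonneg (Nat.cast_nonneg d0) (by linarith)) ht2.le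
    linarith [h, mul_nonpos_of_nonpos_of_nonneg hcoef hq]
  have hgd : gam Dmax m pP pU βIA ystar - gam Dmax m pP pU βIA u
      = βIA * (pU - pP) / W * ((d0:ℝ) * t2) := by
    have h := gam_sub (pP := pP) (pU := pU) (βIA := βIA) hD hm u ystar
    rw [hsumu1] at h
    rw [hWdef]
    linear_combination -h
  have hEgap : βIA * (pU - pP) / W * ((d0:ℝ) * t2)
      ≤ Ey - expo Dmax m pP pU βIA K u := by
    rw [← hgd, hEydef]
    exact expo_gap hK (gam_nonneg hD hm hpP hpU0.le hβ0.le hplanu)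
      (lamb_nonneg hD hm hpP hpU0.le hβ0.le hplanu) hgu hlu
  -- use the SC difference identity with u
  have hkey := SC_sub (Dmax := Dmax) (m := m) (pP := pP) (pU := pU) (βIA := βIA)
    (K := K) τ LP LU cP u ystar
  rw [Finset.sum_add_distrib] at hkey
  set Eu := expo Dmax m pP pU βIA K u with hEudef
  have hEuEy : Eu - Ey ≤ -(βIA * (pU - pP) / W * ((d0:ℝ) * t2)) := by
    rw [hEudef]; linarith
  have hGnn : 0 ≤ βIA * (pU - pP) / W * ((d0:ℝ) * t2) := by
    apply mul_nonneg (div_nonneg (mul_nonneg hβ0.le hΔp.le) hW.le)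
    exact mul_nonneg (Nat.cast_nonneg d0) ht2.le
  have hBsum : LP * W ≤ ∑ d' ∈ Dset Dmax, (d':ℝ) * (LU * m d' - (LU - LP) * u d') := by
    rw [hWdef, Finset.mul_sum]
    apply Finset.sum_le_sum
    intro d' hd'
    have h1 := (hplanu d' hd').2
    have h2 := hm d' hd'
    have h3 : (0:ℝ) ≤ (d':ℝ) := Nat.cast_nonneg d'
    linarith [mul_nonneg h3 (mul_nonneg hDL.le (sub_nonneg.mpr h1))]
  have hfacA : ∑ d' ∈ Dset Dmax,
      τ * (d':ℝ) * (Eu - Ey) * (LU * m d' - (LU - LP) * u d')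
      = τ * (Eu - Ey) * ∑ d' ∈ Dset Dmax, (d':ℝ) * (LU * m d' - (LU - LP) * u d') := by
    rw [Finset.mul_sum]
    exact Finset.sum_congr rfl fun d' _ => by ring
  have hAle : ∑ d' ∈ Dset Dmax,
      τ * (d':ℝ) * (Eu - Ey) * (LU * m d' - (LU - LP) * u d')
      ≤ -(τ * βIA * (pU - pP) * ((d0:ℝ) * t2) * LP) := by
    rw [hfacA]
    have hEneg : τ * (Eu - Ey) ≤ -(τ * (βIA * (pU - pP) / W * ((d0:ℝ) * t2))) := by
      linarith [mul_le_mul_of_nonneg_left hEuEy hτ0.le]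
    have hEneg0 : τ * (Eu - Ey) ≤ 0 := by
      linarith [hEneg, mul_nonneg hτ0.le hGnn]
    calc τ * (Eu - Ey) * ∑ d' ∈ Dset Dmax, (d':ℝ) * (LU * m d' - (LU - LP) * u d')
        ≤ τ * (Eu - Ey) * (LP * W) := by
          apply mul_le_mul_of_nonpos_left hBsum hEneg0
      _ ≤ -(τ * (βIA * (pU - pP) / W * ((d0:ℝ) * t2))) * (LP * W) := by
          apply mul_le_mul_of_nonneg_right hEneg
          exact mul_nonneg hLP.le hW.le
      _ = -(τ * βIA * (pU - pP) * ((d0:ℝ) * t2) * LP) := by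
          field_simp
  have hCsum : ∑ d' ∈ Dset Dmax, (u d' - ystar d')
      * (cP - τ * (1 + (d':ℝ) * Ey) * (LU - LP))
      = t2 * (cP - τ * (1 + (d0:ℝ) * Ey) * (LU - LP)) := by
    rw [← Finset.sum_erase_add _ _ hd0]
    have hrest : ∑ b ∈ (Dset Dmax).erase d0,
        (u b - ystar b) * (cP - τ * (1 + (b:ℝ) * Ey) * (LU - LP)) = 0 := by
      apply Finset.sum_eq_zero
      intro b hb
      rw [huo b (Finset.mem_erase.mp hb).1]; ring
    rw [hrest, hud0, ht2def]; ring
  have hup := hmin u hplanu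
  rw [← hEydef] at hkey
  -- 0 ≤ SC u - SC ystar ≤ -τ βIA Δp d0 t2 LP + t2 (cP - τ(1+d0 Ey)ΔL)
  have hP1 : τ * (1 + (d0:ℝ) * Ey) * (LU - LP) + τ * βIA * (pU - pP) * (d0:ℝ) * LP ≤ cP := by
    have h0 : 0 ≤ SC Dmax m pP pU βIA τ LP LU cP K u
        - SC Dmax m pP pU βIA τ LP LU cP K ystar := by linarith
    rw [hkey] at h0
    have hcomb : 0 ≤ -(τ * βIA * (pU - pP) * ((d0:ℝ) * t2) * LP)
        + t2 * (cP - τ * (1 + (d0:ℝ) * Ey) * (LU - LP)) := by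
      linarith [hAle, hCsum, h0]
    by_contra hno
    push_neg at hno
    have hx2 : 0 ≤ t2 * (cP - τ * (1 + (d0:ℝ) * Ey) * (LU - LP)
        - τ * βIA * (pU - pP) * (d0:ℝ) * LP) := by linarith [hcomb]
    have hx3 := mul_pos ht2 (show 0 < τ * (1 + (d0:ℝ) * Ey) * (LU - LP)
        + τ * βIA * (pU - pP) * (d0:ℝ) * LP - cP by linarith)
    linarith [hx2, hx3]
  -- Step 5 : NE best response at d0 : cP ≤ τ(1+d0 Ex)(LU-LP)
  have hPN := hbr d0 hd0 Act.P hx0pos Act.N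
  simp only [cost] at hPN
  rw [← hExdef] at hPN
  -- final contradiction
  linarith [hP1, hPN,
    mul_pos (mul_pos (mul_pos hτ0 hβ0) hΔp) (mul_pos (lt_of_lt_of_le one_pos hd0r) hLP),
    mul_nonneg (mul_nonneg (mul_nonneg hτ0.le hDL.le) (sub_nonneg.mpr hExEy)) (le_trans zero_le_one hd0r)]
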